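/- Let p be a prime and G = ℤ/p^{λ₁} × ℤ/p^{λ₂} × ℤ/p^{λ₃} with λ₁ ≥ λ₂ ≥ λ₃ ≥ 1. Writing f(a,b,c) for the number of subgroups of ℤ/p^a × ℤ/p^b × ℤ/p^c, the factorization number satisfies F₂(G) = −p³f(λ₁−1,λ₂−1,λ₃−1)² + p(f(λ₁−1,λ₂−1,λ₃)² + p·f(λ₁−1,λ₂,λ₃−1)² + p²·f(λ₁,λ₂−1,λ₃−1)²) − (f(λ₁−1,λ₂,λ₃)² + p·f(λ₁,λ₂−1,λ₃)² + p²·f(λ₁,λ₂,λ₃−1)²) + f(λ₁,λ₂,λ₃)². -/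

import Mathlib

/-!
Let `π : G → V = (ℤ/p)³` be reduction modulo `p`. Its kernel `pG` is the Frattini subgroup of `G`,
so `A + B = G` exactly when `π A + π B = V`. Möbius inversion in the subgroup lattice of `V` turns
the count of such pairs into `F₂(G) = ∑_Y μ(Y, V) · s(π⁻¹ Y)²`, where `s` counts subgroups and
`μ(Y, V)` is `1, -1, p, -p³` for `Y` of index `1, p, p², p³`.

The lines and the planes of `V` each split into echelon cells of sizes `p²`, `p`, `1`. A subspace in
a cell is the image of a coordinate subspace under a unitriangular shear of `V`, and that shear
lifts to an automorphism of `G` (this uses `λ₁ ≥ λ₂ ≥ λ₃`). Hence `π⁻¹ Y` is isomorphic to the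
preimage of a coordinate subspace, which is `ℤ/p^{e₁} × ℤ/p^{e₂} × ℤ/p^{e₃}` with
`eᵢ ∈ {λᵢ, λᵢ - 1}`.
-/

/-- The factorization number of an additive abelian group: the number of ordered
pairs `(A, B)` of subgroups with `A + B = G`. -/
noncomputable def F2 (G : Type*) [AddCommGroup G] : ℕ :=
  Nat.card {x : AddSubgroup G × AddSubgroup G // x.1 ⊔ x.2 = ⊤}

/-- `f p a b c` is the total number of subgroups of `ℤ/p^a × ℤ/p^b × ℤ/p^c`. -/
noncomputable def f (p a b c : ℕ) : ℕ :=
  Nat.card (AddSubgroup (ZMod (p ^ a) × ZMod (p ^ b) × ZMod (p ^ c)))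

open Function AddSubgroup

section General

variable {M N : Type*} [AddCommGroup M] [AddCommGroup N]

theorem Nat.card_addSubgroup_congr (e : M ≃+ N) :
    Nat.card (AddSubgroup M) = Nat.card (AddSubgroup N) :=
  Nat.card_congr e.mapAddSubgroup.toEquiv

theorem Nat.card_addSubgroup_le (H : AddSubgroup M) :
    Nat.card {A : AddSubgroup M // A ≤ H} = Nat.card (AddSubgroup H) :=
  (Nat.card_congr (MapSubtype.orderIso H).toEquiv).symm

theorem Nat.card_eq_mul_of_card_fiber {S T : Type*} [Finite S] [Finite T] (F : S → T) {c : ℕ}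
    (hF : ∀ t, Nat.card {s // F s = t} = c) : Nat.card S = Nat.card T * c := by
  have := Fintype.ofFinite T
  rw [← Nat.card_congr (Equiv.sigmaFiberEquiv F), Nat.card_sigma]
  simp [hF, Nat.card_eq_fintype_card]

theorem AddSubgroup.card_sup_of_inf_eq_bot {H K : AddSubgroup M} (h : H ⊓ K = ⊥) :
    Nat.card ↥(H ⊔ K) = Nat.card H * Nat.card K := by
  set φ := H.subtype.coprod K.subtype
  have hφ : Injective φ := by
    rw [injective_iff_map_eq_zero]
    rintro ⟨a, b⟩ hab
    have ha : (a : M) = -b := eq_neg_of_add_eq_zero_left hab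
    have hmem : (a : M) ∈ H ⊓ K := mem_inf.mpr ⟨a.2, ha ▸ neg_mem b.2⟩
    rw [h, mem_bot] at hmem
    ext <;> simp_all
  have hrange : φ.range = H ⊔ K := by
    ext x
    simp only [AddMonoidHom.mem_range, mem_sup, Prod.exists, Subtype.exists]
    simp [φ]
  rw [← hrange, ← Nat.card_prod]
  exact (Nat.card_congr (AddMonoidHom.ofInjective hφ).toEquiv).symm

theorem AddSubgroup.eq_top_of_forall_eq_add_nsmul {n k : ℕ} (htors : ∀ g : M, n ^ k • g = 0)
    {H : AddSubgroup M} (hH : ∀ g, ∃ x ∈ H, ∃ h, g = x + n • h) : H = ⊤ := by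
  have key : ∀ i : ℕ, ∀ g : M, ∃ x ∈ H, ∃ h, g = x + n ^ i • h := by
    intro i
    induction i with
    | zero => exact fun g => ⟨0, H.zero_mem, g, by simp⟩
    | succ i ih =>
      intro g
      obtain ⟨x, hx, h, rfl⟩ := ih g
      obtain ⟨y, hy, h', rfl⟩ := hH h
      refine ⟨x + n ^ i • y, add_mem hx (nsmul_mem hy _), h', ?_⟩
      rw [smul_add, smul_smul, ← pow_succ, add_assoc]
  refine (eq_top_iff' H).mpr fun g => ?_
  obtain ⟨x, hx, h, rfl⟩ := key k g
  simpa [htors] using hx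

theorem AddSubgroup.map_eq_top_iff_of_ker_le_nsmul {n k : ℕ} (π : M →+ N) (hπ : Surjective π)
    (hker : ∀ g, π g = 0 → ∃ h, g = n • h) (htors : ∀ g : M, n ^ k • g = 0)
    (H : AddSubgroup M) : H.map π = ⊤ ↔ H = ⊤ := by
  refine ⟨fun hH => eq_top_of_forall_eq_add_nsmul htors fun g => ?_, fun hH => ?_⟩
  · obtain ⟨x, hx, hxg⟩ := mem_map.mp (hH ▸ mem_top (π g))
    obtain ⟨h, hh⟩ := hker (g - x) (by rw [map_sub, hxg, sub_self])
    exact ⟨x, hx, h, by rw [← hh, add_sub_cancel]⟩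
  · rw [hH, ← AddMonoidHom.range_eq_map, AddMonoidHom.range_eq_top.mpr hπ]

theorem Nat.card_mem_and_notMem [Finite M] {H K : AddSubgroup M} (h : K ≤ H) :
    Nat.card {x // x ∈ H ∧ x ∉ K} = Nat.card H - Nat.card K := by
  have hdiff := Set.ncard_sdiff (s := (K : Set M)) (t := H) h
  simp only [← Nat.card_coe_set_eq] at hdiff
  exact hdiff

theorem AddSubgroup.card_eq_one_or_prime_or_sq_or_cube {p : ℕ} (hp : p.Prime)
    (hM : Nat.card M = p ^ 3) (Y : AddSubgroup M) :
    Nat.card Y = 1 ∨ Nat.card Y = p ∨ Nat.card Y = p ^ 2 ∨ Nat.card Y = p ^ 3 := by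
  have hdvd : Nat.card Y ∣ p ^ 3 := hM ▸ card_top (G := M) ▸ card_dvd_of_le le_top
  obtain ⟨k, hk, h⟩ := (Nat.dvd_prime_pow hp).mp hdvd
  interval_cases k <;> simp [h]

theorem Nat.card_addSubgroup_comap_eq_of_comp_eq (π : M →+ N) (σ : M ≃+ M) (τ : N →+ N)
    (hσ : π.comp (σ : M →+ M) = τ.comp π) {Y Y₀ : AddSubgroup N} (hY : Y.comap τ = Y₀) :
    Nat.card (AddSubgroup (Y.comap π)) = Nat.card (AddSubgroup (Y₀.comap π)) := by
  rw [← hY, comap_comap, ← hσ, ← comap_comap, comap_equiv_eq_map_symm]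
  exact Nat.card_addSubgroup_congr (σ.symm.addSubgroupMap _)

end General

open scoped Classical in
theorem F2_eq_sum_moebius {M N : Type*} [AddCommGroup M] [AddCommGroup N] [Finite M]
    [Fintype (AddSubgroup N)] (π : M →+ N) (hπ : ∀ H : AddSubgroup M, H.map π = ⊤ ↔ H = ⊤)
    (μ : AddSubgroup N → ℤ)
    (hμ : ∀ Z, ∑ Y, (if Z ≤ Y then μ Y else 0) = if Z = ⊤ then 1 else 0) :
    (F2 M : ℤ) = ∑ Y, μ Y * Nat.card (AddSubgroup (Y.comap π)) ^ 2 := by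
  have := Fintype.ofFinite (AddSubgroup M)
  have hcount : ∀ H : AddSubgroup M,
      (∑ A : AddSubgroup M, if A ≤ H then (1 : ℤ) else 0) = Nat.card (AddSubgroup H) := by
    intro H
    rw [Finset.sum_boole, ← Nat.card_addSubgroup_le, Nat.card_eq_fintype_card,
      Fintype.card_subtype]
  calc (F2 M : ℤ)
      = ∑ x : AddSubgroup M × AddSubgroup M, if (x.1 ⊔ x.2).map π = ⊤ then 1 else 0 := by
        simp only [hπ, Finset.sum_boole]
        rw [F2, Nat.card_eq_fintype_card, Fintype.card_subtype]
    _ = ∑ x : AddSubgroup M × AddSubgroup M, ∑ Y,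
          μ Y * ((if x.1 ≤ Y.comap π then 1 else 0) * (if x.2 ≤ Y.comap π then 1 else 0)) := by
        refine Finset.sum_congr rfl fun x _ => ?_
        rw [← hμ]
        refine Finset.sum_congr rfl fun Y _ => ?_
        simp only [map_le_iff_le_comap, sup_le_iff]
        split_ifs <;> simp_all
    _ = ∑ Y, μ Y * Nat.card (AddSubgroup (Y.comap π)) ^ 2 := by
        rw [Finset.sum_comm]
        refine Finset.sum_congr rfl fun Y _ => ?_
        rw [← Finset.mul_sum, ← hcount, sq, Finset.sum_mul_sum, ← Finset.univ_product_univ,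
          Finset.sum_product]

open scoped Classical in
theorem Fintype.sum_sum_boole_and {α β : Type*} [Fintype α] [Fintype β] (P : α → Prop)
    (Q : α → β → Prop) {c : ℕ} (h : ∀ a, P a → Nat.card {b // Q a b} = c) :
    ∑ a, ∑ b, (if P a ∧ Q a b then 1 else 0) = Nat.card {a // P a} * c := by
  rw [Nat.card_eq_fintype_card, Fintype.card_subtype, Finset.card_filter, Finset.sum_mul]
  refine Finset.sum_congr rfl fun a _ => ?_
  by_cases ha : P a
  · simp only [ha, true_and, if_true, one_mul, ← h a ha, Nat.card_eq_fintype_card,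
      Fintype.card_subtype, Finset.card_filter]
  · simp [ha]

theorem Fintype.sum_ite_eq_sum_comp {ι κ M : Type*} [Fintype ι] [Fintype κ] [AddCommMonoid M]
    (P : κ → Prop) [DecidablePred P] {e : ι → κ} (he : Injective e)
    (hP : ∀ k, P k ↔ ∃ i, e i = k) (F : κ → M) :
    ∑ k, (if P k then F k else 0) = ∑ i, F (e i) := by
  refine (Finset.sum_of_injOn (s := Finset.univ) (t := Finset.univ) (f := fun i => F (e i))
    (g := fun k => if P k then F k else 0) e he.injOn
    (fun _ _ => Finset.mem_coe.mpr (Finset.mem_univ _))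
    (fun k _ hk => if_neg fun h => ?_)
    fun i _ => (if_pos ((hP _).mpr ⟨i, rfl⟩)).symm).symm
  obtain ⟨i, rfl⟩ := (hP k).mp h
  exact hk ⟨i, by simp, rfl⟩

section ElementaryAbelian

variable {p : ℕ} [hp : Fact p.Prime] {W : Type*} [AddCommGroup W] [Finite W]

theorem AddSubgroup.zmultiples_eq_iff_of_card_eq_prime (htors : ∀ x : W, p • x = 0)
    {Z : AddSubgroup W} (hZ : Nat.card Z = p) {x : W} : zmultiples x = Z ↔ x ∈ Z ∧ x ≠ 0 := by
  refine ⟨?_, fun ⟨hxZ, hx⟩ => eq_of_le_of_card_ge (zmultiples_le.mpr hxZ) ?_⟩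
  · rintro rfl
    refine ⟨mem_zmultiples x, fun hx => ?_⟩
    rw [hx, zmultiples_zero_eq_bot, card_bot] at hZ
    exact hp.out.one_lt.ne hZ
  · rw [hZ, Nat.card_zmultiples, addOrderOf_eq_prime (htors x) hx]

theorem AddSubgroup.card_sup_zmultiples_of_notMem (htors : ∀ x : W, p • x = 0)
    {Z : AddSubgroup W} (hZ : Nat.card Z = p) {y : W} (hy : y ∉ Z) :
    Nat.card ↥(Z ⊔ zmultiples y) = p ^ 2 := by
  have hy0 : y ≠ 0 := fun h => hy (h ▸ Z.zero_mem)
  have hinf : Z ⊓ zmultiples y = ⊥ := by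
    by_contra hne
    obtain ⟨⟨x, hx⟩, hx0⟩ := ne_bot_iff_exists_ne_zero.mp hne
    have hxy : zmultiples x = zmultiples y :=
      (zmultiples_eq_iff_of_card_eq_prime htors (by
        rw [Nat.card_zmultiples, addOrderOf_eq_prime (htors y) hy0])).mpr
        ⟨(mem_inf.mp hx).2, fun h => hx0 (Subtype.ext h)⟩
    exact hy (zmultiples_le.mp (hxy ▸ zmultiples_le.mpr (mem_inf.mp hx).1))
  rw [card_sup_of_inf_eq_bot hinf, hZ, Nat.card_zmultiples, addOrderOf_eq_prime (htors y) hy0,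
    sq]

theorem Nat.card_addSubgroups_card_eq_prime (htors : ∀ x : W, p • x = 0) {m : ℕ}
    (hW : Nat.card W - 1 = m * (p - 1)) : Nat.card {Z : AddSubgroup W // Nat.card Z = p} = m := by
  let F : {x : W // x ∈ (⊤ : AddSubgroup W) ∧ x ∉ (⊥ : AddSubgroup W)} →
      {Z : AddSubgroup W // Nat.card Z = p} := fun x =>
    ⟨zmultiples x.1, by
      rw [Nat.card_zmultiples, addOrderOf_eq_prime (htors _) (mem_bot.not.mp x.2.2)]⟩
  have hfiber : ∀ Z, Nat.card {x // F x = Z} = p - 1 := fun Z => by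
    calc Nat.card {x // F x = Z} = Nat.card {x // x ∈ Z.1 ∧ x ∉ (⊥ : AddSubgroup W)} := by
          refine Nat.card_congr ((Equiv.subtypeEquivRight fun x => Subtype.ext_iff).trans
            ((Equiv.subtypeSubtypeEquivSubtypeInter _ (fun x => zmultiples x = Z.1)).trans
            (Equiv.subtypeEquivRight fun x => ?_)))
          rw [zmultiples_eq_iff_of_card_eq_prime htors Z.2, mem_bot]
          simp
      _ = p - 1 := by rw [Nat.card_mem_and_notMem bot_le, Z.2, card_bot]
  have h := Nat.card_eq_mul_of_card_fiber F hfiber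
  rw [Nat.card_mem_and_notMem bot_le, card_top, card_bot, hW] at h
  exact (Nat.eq_of_mul_eq_mul_right (Nat.sub_pos_of_lt hp.out.one_lt) h).symm

theorem Nat.card_supergroups_card_eq_sq (htors : ∀ x : W, p • x = 0)
    (hW : Nat.card W = p ^ 3) {Z : AddSubgroup W} (hZ : Nat.card Z = p) :
    Nat.card {Y : AddSubgroup W // Z ≤ Y ∧ Nat.card Y = p ^ 2} = p + 1 := by
  let F : {y : W // y ∈ (⊤ : AddSubgroup W) ∧ y ∉ Z} →
      {Y : AddSubgroup W // Z ≤ Y ∧ Nat.card Y = p ^ 2} := fun y =>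
    ⟨Z ⊔ zmultiples y.1, le_sup_left, card_sup_zmultiples_of_notMem htors hZ y.2.2⟩
  have hfiber : ∀ Y, Nat.card {y // F y = Y} = p ^ 2 - p := fun Y => by
    calc Nat.card {y // F y = Y} = Nat.card {y // y ∈ Y.1 ∧ y ∉ Z} := by
          refine Nat.card_congr ((Equiv.subtypeEquivRight fun y => Subtype.ext_iff).trans
            ((Equiv.subtypeSubtypeEquivSubtypeInter _ (fun y => Z ⊔ zmultiples y = Y.1)).trans
            (Equiv.subtypeEquivRight fun y => ?_)))
          simp only [mem_top, true_and]
          refine ⟨fun ⟨hy, hsup⟩ => ⟨hsup ▸ mem_sup_right (mem_zmultiples y), hy⟩,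
            fun ⟨hy, hyZ⟩ => ⟨hyZ, eq_of_le_of_card_ge (sup_le Y.2.1 (zmultiples_le.mpr hy)) ?_⟩⟩
          rw [Y.2.2, card_sup_zmultiples_of_notMem htors hZ hyZ]
      _ = p ^ 2 - p := by rw [Nat.card_mem_and_notMem Y.2.1, Y.2.2, hZ]
  have h := Nat.card_eq_mul_of_card_fiber F hfiber
  rw [Nat.card_mem_and_notMem le_top, card_top, hW, hZ] at h
  have hp2 : 0 < p ^ 2 - p := Nat.sub_pos_of_lt (by nlinarith [hp.out.two_le])
  refine Nat.eq_of_mul_eq_mul_right hp2 (h.symm.trans ?_)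
  zify [Nat.le_self_pow (by norm_num : 3 ≠ 0) p, Nat.le_self_pow (by norm_num : 2 ≠ 0) p]
  ring

theorem Nat.card_addSubgroups_card_eq_prime_of_card_eq_cube (htors : ∀ x : W, p • x = 0)
    (hW : Nat.card W = p ^ 3) : Nat.card {Z : AddSubgroup W // Nat.card Z = p} = p ^ 2 + p + 1 :=
  Nat.card_addSubgroups_card_eq_prime htors (by
    rw [hW]; zify [Nat.one_le_pow 3 p hp.out.pos, hp.out.one_le]; ring)

theorem Nat.card_addSubgroups_card_eq_sq (htors : ∀ x : W, p • x = 0)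
    (hW : Nat.card W = p ^ 3) :
    Nat.card {Y : AddSubgroup W // Nat.card Y = p ^ 2} = p ^ 2 + p + 1 := by
  classical
  have := Fintype.ofFinite (AddSubgroup W)
  have h1 := hp.out.one_le
  have hlines := Nat.card_addSubgroups_card_eq_prime_of_card_eq_cube htors hW
  have hlinesIn : ∀ Y : AddSubgroup W, Nat.card Y = p ^ 2 →
      Nat.card {Z // Z ≤ Y ∧ Nat.card Z = p} = p + 1 := fun Y hY => by
    calc Nat.card {Z // Z ≤ Y ∧ Nat.card Z = p}
        = Nat.card {Z : AddSubgroup Y // Nat.card Z = p} := by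
          refine (Nat.card_congr (((MapSubtype.orderIso Y).toEquiv.subtypeEquiv fun Z => ?_).trans
            (Equiv.subtypeSubtypeEquivSubtypeInter (· ≤ Y) (fun Z => Nat.card Z = p)))).symm
          exact iff_of_eq (congrArg (· = p) (card_map_of_injective Y.subtype_injective).symm)
      _ = p + 1 := Nat.card_addSubgroups_card_eq_prime (fun z => Subtype.ext (htors z.1)) (by
          rw [hY]; zify [Nat.one_le_pow 2 p hp.out.pos, h1]; ring)
  have hplanes := Fintype.sum_sum_boole_and (fun Y : AddSubgroup W => Nat.card Y = p ^ 2)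
    (fun Y Z => Z ≤ Y ∧ Nat.card Z = p) hlinesIn
  have hincid := Fintype.sum_sum_boole_and (fun Z : AddSubgroup W => Nat.card Z = p)
    (fun Z Y => Z ≤ Y ∧ Nat.card Y = p ^ 2) fun Z hZ => card_supergroups_card_eq_sq htors hW hZ
  rw [Finset.sum_comm, hlines] at hincid
  refine Nat.eq_of_mul_eq_mul_right (Nat.succ_pos p) (hplanes.symm.trans (hincid ▸ ?_))
  exact Finset.sum_congr rfl fun _ _ => Finset.sum_congr rfl fun _ _ => by
    congr 1
    exact propext (by tauto)

theorem Nat.card_supergroups_card_eq_self (Z : AddSubgroup W) :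
    Nat.card {Y : AddSubgroup W // Z ≤ Y ∧ Nat.card Y = Nat.card Z} = 1 :=
  Nat.card_eq_one_iff_unique.mpr ⟨⟨fun Y Y' => Subtype.ext <|
      (eq_of_le_of_card_ge Y.2.1 Y.2.2.le).symm.trans (eq_of_le_of_card_ge Y'.2.1 Y'.2.2.le)⟩,
    ⟨⟨Z, le_rfl, rfl⟩⟩⟩

theorem Nat.card_supergroups_of_lt {Z : AddSubgroup W} {c : ℕ} (hc : c < Nat.card Z) :
    Nat.card {Y : AddSubgroup W // Z ≤ Y ∧ Nat.card Y = c} = 0 :=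
  @Nat.card_of_isEmpty _ ⟨fun Y => (card_le_of_le Y.2.1).not_gt (lt_of_eq_of_lt Y.2.2 hc)⟩

theorem AddSubgroup.sum_eq_of_card_eq_cube [Fintype (AddSubgroup W)] {R : Type*}
    [AddCommMonoid R] (hW : Nat.card W = p ^ 3) (F : AddSubgroup W → R) :
    ∑ Y, F Y = F ⊥ + ∑ Y : AddSubgroup W, (if Nat.card Y = p then F Y else 0)
      + ∑ Y : AddSubgroup W, (if Nat.card Y = p ^ 2 then F Y else 0) + F ⊤ := by
  classical
  have h1 : 1 < p := hp.out.one_lt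
  have h2 : p < p ^ 2 := by nlinarith
  have h3 : p ^ 2 < p ^ 3 := by nlinarith
  have hsplit : ∀ Y : AddSubgroup W, F Y = (if Nat.card Y = 1 then F Y else 0)
      + (if Nat.card Y = p then F Y else 0) + (if Nat.card Y = p ^ 2 then F Y else 0)
      + (if Nat.card Y = p ^ 3 then F Y else 0) := fun Y => by
    rcases AddSubgroup.card_eq_one_or_prime_or_sq_or_cube hp.out hW Y with h | h | h | h <;>
      simp [h, h1.ne, h1.ne', h2.ne, h2.ne', h3.ne, h3.ne', (h1.trans h2).ne,
        (h2.trans h3).ne, (h2.trans h3).ne', (h1.trans (h2.trans h3)).ne]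
  rw [Finset.sum_congr rfl fun Y _ => hsplit Y]
  simp only [Finset.sum_add_distrib, card_eq_one, ← hW, card_eq_iff_eq_top, Finset.sum_ite_eq',
    Finset.mem_univ, if_true]

end ElementaryAbelian

section Moebius

variable {p : ℕ} {W : Type*} [AddCommGroup W]

variable (p) in
/-- The Möbius function `μ(Y, W)` of the subgroup lattice of an elementary abelian group `W` of
order `p ^ 3`: it equals `(-1) ^ k * p ^ (k * (k - 1) / 2)` on subgroups of index `p ^ k`. -/
noncomputable def moebiusRankThree (Y : AddSubgroup W) : ℤ :=
  if Nat.card Y = 1 then -p ^ 3 else if Nat.card Y = p then p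
  else if Nat.card Y = p ^ 2 then -1 else 1

theorem moebiusRankThree_bot : moebiusRankThree p (⊥ : AddSubgroup W) = -p ^ 3 := by
  rw [moebiusRankThree, card_bot, if_pos rfl]

theorem moebiusRankThree_of_card_eq_prime [hp : Fact p.Prime] {Y : AddSubgroup W}
    (hY : Nat.card Y = p) : moebiusRankThree p Y = p := by
  rw [moebiusRankThree, hY, if_neg hp.out.one_lt.ne', if_pos rfl]

theorem moebiusRankThree_of_card_eq_sq [hp : Fact p.Prime] {Y : AddSubgroup W}
    (hY : Nat.card Y = p ^ 2) : moebiusRankThree p Y = -1 := by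
  have h1 : 1 < p := hp.out.one_lt
  rw [moebiusRankThree, hY, if_neg (by nlinarith), if_neg (by nlinarith), if_pos rfl]

theorem moebiusRankThree_top [hp : Fact p.Prime] (hW : Nat.card W = p ^ 3) :
    moebiusRankThree p (⊤ : AddSubgroup W) = 1 := by
  have h1 : 1 < p := hp.out.one_lt
  have h2 : p < p ^ 2 := by nlinarith
  have h3 : p ^ 2 < p ^ 3 := by nlinarith
  rw [moebiusRankThree, card_top, hW, if_neg (h1.trans (h2.trans h3)).ne',
    if_neg (h2.trans h3).ne', if_neg h3.ne']

open scoped Classical in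
theorem AddSubgroup.sum_ite_card_eq_ite_le [Fintype (AddSubgroup W)] (Z : AddSubgroup W)
    {μ : AddSubgroup W → ℤ} {c : ℕ} {a : ℤ} (ha : ∀ Y : AddSubgroup W, Nat.card Y = c → μ Y = a) :
    ∑ Y : AddSubgroup W, (if Nat.card Y = c then (if Z ≤ Y then μ Y else 0) else 0) =
      Nat.card {Y // Z ≤ Y ∧ Nat.card Y = c} * a := by
  calc ∑ Y : AddSubgroup W, (if Nat.card Y = c then (if Z ≤ Y then μ Y else 0) else 0)
      = ∑ Y : AddSubgroup W, (if Z ≤ Y ∧ Nat.card Y = c then a else 0) :=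
        Finset.sum_congr rfl fun Y _ => by by_cases hY : Nat.card Y = c <;> simp [hY, ha]
    _ = Nat.card {Y // Z ≤ Y ∧ Nat.card Y = c} * a := by
        simp [Finset.sum_ite, Nat.card_eq_fintype_card, Fintype.card_subtype]

open scoped Classical in
theorem sum_moebiusRankThree [hp : Fact p.Prime] [Finite W] [Fintype (AddSubgroup W)]
    (htors : ∀ x : W, p • x = 0) (hW : Nat.card W = p ^ 3) (Z : AddSubgroup W) :
    ∑ Y, (if Z ≤ Y then moebiusRankThree p Y else 0) = if Z = ⊤ then 1 else 0 := by
  have h1 : 1 < p := hp.out.one_lt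
  have h2 : p < p ^ 2 := by nlinarith
  have h3 : p ^ 2 < p ^ 3 := by nlinarith
  rw [sum_eq_of_card_eq_cube hW, if_pos le_top, moebiusRankThree_top hW, moebiusRankThree_bot,
    sum_ite_card_eq_ite_le Z fun _ => moebiusRankThree_of_card_eq_prime,
    sum_ite_card_eq_ite_le Z fun _ => moebiusRankThree_of_card_eq_sq]
  have hbot_le : Z ≤ ⊥ → Nat.card Z = 1 := fun h => by rw [le_bot_iff.mp h, card_bot]
  have htop_eq : Z = ⊤ → Nat.card Z = p ^ 3 := fun h => by rw [h, card_top, hW]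
  rcases AddSubgroup.card_eq_one_or_prime_or_sq_or_cube hp.out hW Z with hZ | hZ | hZ | hZ
  · obtain rfl := card_eq_one.mp hZ
    simp only [bot_le, true_and, if_true, if_neg fun h => by linarith [htop_eq h],
      Nat.card_addSubgroups_card_eq_prime_of_card_eq_cube htors hW,
      Nat.card_addSubgroups_card_eq_sq htors hW]
    push_cast
    ring
  · rw [if_neg fun h => by linarith [hbot_le h], if_neg fun h => by linarith [htop_eq h],
      ← hZ, Nat.card_supergroups_card_eq_self, hZ, Nat.card_supergroups_card_eq_sq htors hW hZ]
    push_cast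
    ring
  · rw [if_neg fun h => by linarith [hbot_le h], if_neg fun h => by linarith [htop_eq h],
      Nat.card_supergroups_of_lt (hZ ▸ h2), ← hZ, Nat.card_supergroups_card_eq_self]
    simp
  · obtain rfl := (card_eq_iff_eq_top Z).mp (hZ.trans hW.symm)
    rw [if_neg fun h => by linarith [hbot_le h], Nat.card_supergroups_of_lt (hZ ▸ h2.trans h3),
      Nat.card_supergroups_of_lt (hZ ▸ h3)]
    simp

end Moebius

section Shear

variable {A B C A' B' C' : Type*} [AddCommGroup A] [AddCommGroup B] [AddCommGroup C]
  [AddCommGroup A'] [AddCommGroup B'] [AddCommGroup C']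

def AddEquiv.shear (f : A →+ B) (g : A →+ C) (h : B →+ C) : A × B × C ≃+ A × B × C where
  toFun v := (v.1, v.2.1 + f v.1, v.2.2 + g v.1 + h v.2.1)
  invFun v := (v.1, v.2.1 - f v.1, v.2.2 - g v.1 - h (v.2.1 - f v.1))
  left_inv v := by ext <;> simp; abel
  right_inv v := by ext <;> simp; abel
  map_add' u v := by
    simp only [Prod.fst_add, Prod.snd_add, map_add, Prod.mk_add_mk, Prod.mk.injEq, true_and]
    constructor <;> abel

@[simp]
theorem AddEquiv.shear_apply (f : A →+ B) (g : A →+ C) (h : B →+ C) (v : A × B × C) :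
    AddEquiv.shear f g h v = (v.1, v.2.1 + f v.1, v.2.2 + g v.1 + h v.2.1) :=
  rfl

theorem AddMonoidHom.prodMap_comp_shear (π₁ : A →+ A') (π₂ : B →+ B') (π₃ : C →+ C')
    {f : A →+ B} {g : A →+ C} {h : B →+ C} {f' : A' →+ B'} {g' : A' →+ C'} {h' : B' →+ C'}
    (hf : π₂.comp f = f'.comp π₁) (hg : π₃.comp g = g'.comp π₁) (hh : π₃.comp h = h'.comp π₂) :
    (π₁.prodMap (π₂.prodMap π₃)).comp (AddEquiv.shear f g h : A × B × C →+ A × B × C) =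
      (AddEquiv.shear f' g' h' : A' × B' × C' →+ A' × B' × C').comp
        (π₁.prodMap (π₂.prodMap π₃)) := by
  replace hf := DFunLike.congr_fun hf
  replace hg := DFunLike.congr_fun hg
  replace hh := DFunLike.congr_fun hh
  simp only [AddMonoidHom.comp_apply] at hf hg hh
  ext v <;> simp [hf, hg, hh]

end Shear

namespace RankThree

variable {p : ℕ} [hp : Fact p.Prime]

variable (p) in
abbrev V := ZMod p × ZMod p × ZMod p

noncomputable def shearV (α β γ : ZMod p) : V p ≃+ V p :=
  AddEquiv.shear (AddMonoidHom.mulLeft α) (AddMonoidHom.mulLeft β) (AddMonoidHom.mulLeft γ)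

def line₁ (β γ : ZMod p) : AddSubgroup (V p) where
  carrier := {v | v.2.1 = β * v.1 ∧ v.2.2 = γ * v.1}
  zero_mem' := by simp
  add_mem' := by
    rintro u v ⟨h₁, h₂⟩ ⟨h₃, h₄⟩
    exact ⟨by simp [h₁, h₃, mul_add], by simp [h₂, h₄, mul_add]⟩
  neg_mem' := by rintro v ⟨h₁, h₂⟩; exact ⟨by simp [h₁], by simp [h₂]⟩

def line₂ (γ : ZMod p) : AddSubgroup (V p) where
  carrier := {v | v.1 = 0 ∧ v.2.2 = γ * v.2.1}
  zero_mem' := by simp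
  add_mem' := by
    rintro u v ⟨h₁, h₂⟩ ⟨h₃, h₄⟩
    exact ⟨by simp [h₁, h₃], by simp [h₂, h₄, mul_add]⟩
  neg_mem' := by rintro v ⟨h₁, h₂⟩; exact ⟨by simp [h₁], by simp [h₂]⟩

def line₃ : AddSubgroup (V p) where
  carrier := {v | v.1 = 0 ∧ v.2.1 = 0}
  zero_mem' := by simp
  add_mem' := by rintro u v ⟨h₁, h₂⟩ ⟨h₃, h₄⟩; exact ⟨by simp [h₁, h₃], by simp [h₂, h₄]⟩
  neg_mem' := by rintro v ⟨h₁, h₂⟩; exact ⟨by simp [h₁], by simp [h₂]⟩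

def plane₁₂ (α β : ZMod p) : AddSubgroup (V p) where
  carrier := {v | v.2.2 = α * v.1 + β * v.2.1}
  zero_mem' := by simp
  add_mem' := by
    rintro u v (h₁ : u.2.2 = _) (h₂ : v.2.2 = _)
    simp only [Set.mem_ofPred_eq, Prod.snd_add, Prod.fst_add, h₁, h₂]
    ring
  neg_mem' := by
    rintro v (h : v.2.2 = _)
    simp only [Set.mem_ofPred_eq, Prod.snd_neg, Prod.fst_neg, h]
    ring

def plane₁₃ (α : ZMod p) : AddSubgroup (V p) where
  carrier := {v | v.2.1 = α * v.1}
  zero_mem' := by simp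
  add_mem' := by rintro u v (h₁ : u.2.1 = _) (h₂ : v.2.1 = _); simp [h₁, h₂, mul_add]
  neg_mem' := by rintro v (h : v.2.1 = _); simp [h]

def plane₂₃ : AddSubgroup (V p) where
  carrier := {v | v.1 = 0}
  zero_mem' := by simp
  add_mem' := by rintro u v (h₁ : u.1 = 0) (h₂ : v.1 = 0); simp [h₁, h₂]
  neg_mem' := by rintro v (h : v.1 = 0); simp [h]

section Membership

variable {v : V p}

@[simp] theorem mem_line₁ {β γ : ZMod p} : v ∈ line₁ β γ ↔ v.2.1 = β * v.1 ∧ v.2.2 = γ * v.1 :=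
  Iff.rfl
@[simp] theorem mem_line₂ {γ : ZMod p} : v ∈ line₂ γ ↔ v.1 = 0 ∧ v.2.2 = γ * v.2.1 := Iff.rfl
@[simp] theorem mem_line₃ : v ∈ line₃ ↔ v.1 = 0 ∧ v.2.1 = 0 := Iff.rfl
@[simp] theorem mem_plane₁₂ {α β : ZMod p} : v ∈ plane₁₂ α β ↔ v.2.2 = α * v.1 + β * v.2.1 :=
  Iff.rfl
@[simp] theorem mem_plane₁₃ {α : ZMod p} : v ∈ plane₁₃ α ↔ v.2.1 = α * v.1 := Iff.rfl
@[simp] theorem mem_plane₂₃ : v ∈ plane₂₃ ↔ v.1 = 0 := Iff.rfl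

end Membership

variable (p) in
abbrev coord (K₁ K₂ K₃ : AddSubgroup (ZMod p)) : AddSubgroup (V p) := K₁.prod (K₂.prod K₃)

theorem comap_shearV_line₁ (β γ : ZMod p) :
    (line₁ β γ).comap (shearV β γ 0 : V p →+ V p) = coord p ⊤ ⊥ ⊥ := by
  ext ⟨x, y, z⟩; simp [shearV, mem_prod]

theorem comap_shearV_line₂ (γ : ZMod p) :
    (line₂ γ).comap (shearV 0 0 γ : V p →+ V p) = coord p ⊥ ⊤ ⊥ := by
  ext ⟨x, y, z⟩; simp [shearV, mem_prod]

theorem comap_shearV_line₃ :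
    (line₃ (p := p)).comap (shearV (p := p) 0 0 0 : V p →+ V p) =
      coord p ⊥ ⊥ ⊤ := by
  ext ⟨x, y, z⟩; simp [shearV, mem_prod]

theorem comap_shearV_plane₁₂ (α β : ZMod p) :
    (plane₁₂ α β).comap (shearV 0 α β : V p →+ V p) =
      coord p ⊤ ⊤ ⊥ := by
  ext ⟨x, y, z⟩; simp [shearV, mem_prod]

theorem comap_shearV_plane₁₃ (α : ZMod p) :
    (plane₁₃ α).comap (shearV α 0 0 : V p →+ V p) = coord p ⊤ ⊥ ⊤ := by
  ext ⟨x, y, z⟩; simp [shearV, mem_prod]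

theorem comap_shearV_plane₂₃ :
    (plane₂₃ (p := p)).comap (shearV (p := p) 0 0 0 : V p →+ V p) =
      coord p ⊥ ⊤ ⊤ := by
  ext ⟨x, y, z⟩; simp [shearV, mem_prod]

theorem card_eq_of_comap_shearV {Y : AddSubgroup (V p)} {α β γ : ZMod p}
    {K₁ K₂ K₃ : AddSubgroup (ZMod p)} (h : Y.comap (shearV α β γ : V p →+ V p) = coord p K₁ K₂ K₃) :
    Nat.card Y = Nat.card K₁ * (Nat.card K₂ * Nat.card K₃) := by
  rw [← card_map_of_injective (f := ((shearV α β γ).symm : V p →+ V p))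
      (shearV α β γ).symm.injective, ← comap_equiv_eq_map_symm, h,
    Nat.card_congr (prodEquiv _ _).toEquiv, Nat.card_prod, Nat.card_congr (prodEquiv _ _).toEquiv,
    Nat.card_prod]

variable (p) in
/-- Lines and planes of `V p` are indexed by their reduced echelon forms: a pair of free entries
when the pivot sits in the first position, a single one for the second, none for the third. -/
abbrev CellIndex := (ZMod p × ZMod p) ⊕ ZMod p ⊕ Unit

def line : CellIndex p → AddSubgroup (V p)
  | .inl (β, γ) => line₁ β γ
  | .inr (.inl γ) => line₂ γ
  | .inr (.inr ()) => line₃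

def plane : CellIndex p → AddSubgroup (V p)
  | .inl (α, β) => plane₁₂ α β
  | .inr (.inl α) => plane₁₃ α
  | .inr (.inr ()) => plane₂₃

theorem card_line (t : CellIndex p) : Nat.card (line t) = p := by
  rcases t with ⟨β, γ⟩ | γ | ⟨⟩
  · exact (card_eq_of_comap_shearV (comap_shearV_line₁ β γ)).trans (by simp)
  · exact (card_eq_of_comap_shearV (comap_shearV_line₂ γ)).trans (by simp)
  · exact (card_eq_of_comap_shearV comap_shearV_line₃).trans (by simp)

theorem card_plane (t : CellIndex p) : Nat.card (plane t) = p ^ 2 := by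
  rcases t with ⟨α, β⟩ | α | ⟨⟩
  · exact (card_eq_of_comap_shearV (comap_shearV_plane₁₂ α β)).trans (by simp [sq])
  · exact (card_eq_of_comap_shearV (comap_shearV_plane₁₃ α)).trans (by simp [sq])
  · exact (card_eq_of_comap_shearV comap_shearV_plane₂₃).trans (by simp [sq])

def lineGenerator : CellIndex p → V p
  | .inl (β, γ) => (1, β, γ)
  | .inr (.inl γ) => (0, 1, γ)
  | .inr (.inr ()) => (0, 0, 1)

theorem lineGenerator_mem_line_iff {s t : CellIndex p} : lineGenerator s ∈ line t ↔ s = t := by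
  rcases s with ⟨β, γ⟩ | γ | ⟨⟩ <;> rcases t with ⟨β', γ'⟩ | γ' | ⟨⟩ <;>
    simp [lineGenerator, line, eq_comm]

theorem line_injective : Injective (line (p := p)) := fun _ _ h =>
  lineGenerator_mem_line_iff.mp (h ▸ lineGenerator_mem_line_iff.mpr rfl)

def planeGenerators : CellIndex p → V p × V p
  | .inl (α, β) => ((1, 0, α), (0, 1, β))
  | .inr (.inl α) => ((1, α, 0), (0, 0, 1))
  | .inr (.inr ()) => ((0, 1, 0), (0, 0, 1))

theorem planeGenerators_mem_plane_iff {s t : CellIndex p} :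
    (planeGenerators s).1 ∈ plane t ∧ (planeGenerators s).2 ∈ plane t ↔ s = t := by
  rcases s with ⟨α, β⟩ | α | ⟨⟩ <;> rcases t with ⟨α', β'⟩ | α' | ⟨⟩ <;>
    simp [planeGenerators, plane, eq_comm]

theorem plane_injective : Injective (plane (p := p)) := fun _ _ h =>
  planeGenerators_mem_plane_iff.mp (h ▸ planeGenerators_mem_plane_iff.mpr rfl)

theorem nsmul_prime_eq_zero (v : V p) : p • v = 0 := by
  ext <;> simp

theorem card_V : Nat.card (V p) = p ^ 3 := by
  simp [pow_succ, mul_assoc]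

theorem card_cellIndex : Nat.card (CellIndex p) = p ^ 2 + p + 1 := by
  simp [Nat.card_eq_fintype_card, sq, add_assoc]

theorem exists_mem_line {w : V p} (hw : w ≠ 0) : ∃ t, w ∈ line t := by
  obtain ⟨x, y, z⟩ := w
  by_cases hx : x = 0
  · by_cases hy : y = 0
    · exact ⟨.inr (.inr ()), by simp [line, hx, hy]⟩
    · exact ⟨.inr (.inl (z / y)), by simp [line, hx, div_mul_cancel₀ _ hy]⟩
  · exact ⟨.inl (y / x, z / x), by simp [line, div_mul_cancel₀ _ hx]⟩

theorem exists_line_eq {Z : AddSubgroup (V p)} (hZ : Nat.card Z = p) : ∃ t, line t = Z := by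
  obtain ⟨⟨w, hwZ⟩, hw⟩ := ne_bot_iff_exists_ne_zero.mp fun h : Z = ⊥ => by
    rw [h, card_bot] at hZ
    exact hp.out.one_lt.ne hZ
  have hw0 : w ≠ 0 := fun h => hw (Subtype.ext h)
  obtain ⟨t, ht⟩ := exists_mem_line hw0
  exact ⟨t, ((zmultiples_eq_iff_of_card_eq_prime nsmul_prime_eq_zero (card_line t)).mpr
    ⟨ht, hw0⟩).symm.trans
      ((zmultiples_eq_iff_of_card_eq_prime nsmul_prime_eq_zero hZ).mpr ⟨hwZ, hw0⟩)⟩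

theorem exists_plane_eq {Y : AddSubgroup (V p)} (hY : Nat.card Y = p ^ 2) : ∃ t, plane t = Y := by
  have hbij : Bijective fun t : CellIndex p =>
      (⟨plane t, card_plane t⟩ : {Y : AddSubgroup (V p) // Nat.card Y = p ^ 2}) :=
    Injective.bijective_of_nat_card_le (fun _ _ h => plane_injective (congrArg Subtype.val h)) (by
      rw [Nat.card_addSubgroups_card_eq_sq nsmul_prime_eq_zero card_V, card_cellIndex])
  obtain ⟨t, ht⟩ := hbij.2 ⟨Y, hY⟩
  exact ⟨t, congrArg Subtype.val ht⟩

theorem sum_ite_card_eq_prime {M : Type*} [AddCommMonoid M] [Fintype (AddSubgroup (V p))]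
    (F : AddSubgroup (V p) → M) :
    ∑ Y : AddSubgroup (V p), (if Nat.card Y = p then F Y else 0) = ∑ t, F (line t) :=
  Fintype.sum_ite_eq_sum_comp _ line_injective
    (fun _ => ⟨exists_line_eq, fun ⟨t, ht⟩ => ht ▸ card_line t⟩) F

theorem sum_ite_card_eq_sq {M : Type*} [AddCommMonoid M] [Fintype (AddSubgroup (V p))]
    (F : AddSubgroup (V p) → M) :
    ∑ Y : AddSubgroup (V p), (if Nat.card Y = p ^ 2 then F Y else 0) = ∑ t, F (plane t) :=
  Fintype.sum_ite_eq_sum_comp _ plane_injective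
    (fun _ => ⟨exists_plane_eq, fun ⟨t, ht⟩ => ht ▸ card_plane t⟩) F

variable (p) in
noncomputable def red (k : ℕ) [NeZero k] : ZMod (p ^ k) →+* ZMod p :=
  ZMod.castHom (dvd_pow_self p (NeZero.ne k)) _

theorem exists_eq_nsmul_of_red_eq_zero {k : ℕ} [NeZero k] {x : ZMod (p ^ k)}
    (hx : red p k x = 0) : ∃ y, x = p • y := by
  have : NeZero (p ^ k) := ⟨pow_ne_zero k hp.out.ne_zero⟩
  rw [← ZMod.natCast_zmod_val x, map_natCast, ZMod.natCast_eq_zero_iff] at hx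
  obtain ⟨m, hm⟩ := hx
  exact ⟨m, by rw [← ZMod.natCast_zmod_val x, hm, nsmul_eq_mul, Nat.cast_mul]⟩

theorem card_ker_red (k : ℕ) [NeZero k] :
    Nat.card (red p k : ZMod (p ^ k) →+ ZMod p).ker = p ^ (k - 1) := by
  have : NeZero (p ^ k) := ⟨pow_ne_zero k hp.out.ne_zero⟩
  have h := (red p k : ZMod (p ^ k) →+ ZMod p).ker.card_mul_index
  rw [AddSubgroup.index_ker, AddMonoidHom.range_eq_top.mpr (ZMod.ringHom_surjective (red p k)),
    card_top, Nat.card_zmod, Nat.card_zmod] at h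
  refine Nat.eq_of_mul_eq_mul_right hp.out.pos (h.trans ?_)
  rw [← pow_succ, Nat.sub_one_add_one (NeZero.ne k)]

noncomputable def comapRedBotEquiv (k : ℕ) [NeZero k] :
    (⊥ : AddSubgroup (ZMod p)).comap (red p k : ZMod (p ^ k) →+ ZMod p) ≃+ ZMod (p ^ (k - 1)) :=
  (zmodAddCyclicAddEquiv (AddSubgroup.isAddCyclic _)).symm.trans
    (ZMod.ringEquivCongr (card_ker_red k)).toAddEquiv

noncomputable def comapRedTopEquiv (k : ℕ) [NeZero k] :
    (⊤ : AddSubgroup (ZMod p)).comap (red p k : ZMod (p ^ k) →+ ZMod p) ≃+ ZMod (p ^ k) :=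
  (AddEquiv.addSubgroupCongr (comap_top _)).trans topEquiv

variable {a b c : ℕ} [NeZero a] [NeZero b] [NeZero c]

variable (p a b c) in
noncomputable def reduction : ZMod (p ^ a) × ZMod (p ^ b) × ZMod (p ^ c) →+ V p :=
  (red p a : ZMod (p ^ a) →+ ZMod p).prodMap
    ((red p b : ZMod (p ^ b) →+ ZMod p).prodMap (red p c : ZMod (p ^ c) →+ ZMod p))

theorem map_reduction_eq_top_iff (hba : b ≤ a) (hca : c ≤ a)
    (H : AddSubgroup (ZMod (p ^ a) × ZMod (p ^ b) × ZMod (p ^ c))) :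
    H.map (reduction p a b c) = ⊤ ↔ H = ⊤ := by
  refine map_eq_top_iff_of_ker_le_nsmul (n := p) (k := a) _ ?_ (fun g hg => ?_) (fun g => ?_) H
  · simp only [reduction, AddMonoidHom.coe_prodMap]
    exact (ZMod.ringHom_surjective _).prodMap
      ((ZMod.ringHom_surjective _).prodMap (ZMod.ringHom_surjective _))
  · obtain ⟨x, y, z⟩ := g
    simp only [reduction, AddMonoidHom.coe_prodMap, AddMonoidHom.coe_coe, Prod.map_apply,
      Prod.mk_eq_zero] at hg
    obtain ⟨y₁, hy₁⟩ := exists_eq_nsmul_of_red_eq_zero hg.1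
    obtain ⟨y₂, hy₂⟩ := exists_eq_nsmul_of_red_eq_zero hg.2.1
    obtain ⟨y₃, hy₃⟩ := exists_eq_nsmul_of_red_eq_zero hg.2.2
    exact ⟨(y₁, y₂, y₃), Prod.ext hy₁ (Prod.ext hy₂ hy₃)⟩
  · have h : ∀ {k : ℕ}, k ≤ a → ∀ x : ZMod (p ^ k), p ^ a • x = 0 := fun hk x => by
      rw [nsmul_eq_mul, (ZMod.natCast_eq_zero_iff _ _).mpr (pow_dvd_pow p hk), zero_mul]
    exact Prod.ext (h le_rfl _) (Prod.ext (h hba _) (h hca _))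

theorem card_addSubgroup_comap_reduction_prod {K₁ K₂ K₃ : AddSubgroup (ZMod p)} {n₁ n₂ n₃ : ℕ}
    (e₁ : K₁.comap (red p a : ZMod (p ^ a) →+ ZMod p) ≃+ ZMod (p ^ n₁))
    (e₂ : K₂.comap (red p b : ZMod (p ^ b) →+ ZMod p) ≃+ ZMod (p ^ n₂))
    (e₃ : K₃.comap (red p c : ZMod (p ^ c) →+ ZMod p) ≃+ ZMod (p ^ n₃)) :
    Nat.card (AddSubgroup ((coord p K₁ K₂ K₃).comap (reduction p a b c))) = f p n₁ n₂ n₃ := by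
  rw [reduction, AddMonoidHom.prodMap_comap_prod, AddMonoidHom.prodMap_comap_prod]
  exact Nat.card_addSubgroup_congr
    ((prodEquiv _ _).trans (e₁.prodCongr ((prodEquiv _ _).trans (e₂.prodCongr e₃))))

theorem exists_red_comp_eq_mulLeft_comp_red (β : ZMod p) (hba : b ≤ a) :
    ∃ φ : ZMod (p ^ a) →+ ZMod (p ^ b), (red p b : ZMod (p ^ b) →+ ZMod p).comp φ =
      (AddMonoidHom.mulLeft β).comp (red p a : ZMod (p ^ a) →+ ZMod p) := by
  obtain ⟨β', rfl⟩ := ZMod.ringHom_surjective (red p b) β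
  have hcomp : (red p b).comp (ZMod.castHom (pow_dvd_pow p hba) (ZMod (p ^ b))) = red p a :=
    RingHom.ext_zmod _ _
  refine ⟨(AddMonoidHom.mulLeft β').comp (ZMod.castHom (pow_dvd_pow p hba) (ZMod (p ^ b)) :
    ZMod (p ^ a) →+ ZMod (p ^ b)), AddMonoidHom.ext fun x => ?_⟩
  simp [← hcomp]

theorem card_addSubgroup_comap_reduction_eq_of_comap_shearV (hba : b ≤ a) (hcb : c ≤ b)
    (α β γ : ZMod p) {Y Y₀ : AddSubgroup (V p)} (hY : Y.comap (shearV α β γ : V p →+ V p) = Y₀) :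
    Nat.card (AddSubgroup (Y.comap (reduction p a b c))) =
      Nat.card (AddSubgroup (Y₀.comap (reduction p a b c))) := by
  obtain ⟨φ₁, h₁⟩ := exists_red_comp_eq_mulLeft_comp_red α hba
  obtain ⟨φ₂, h₂⟩ := exists_red_comp_eq_mulLeft_comp_red β (hcb.trans hba)
  obtain ⟨φ₃, h₃⟩ := exists_red_comp_eq_mulLeft_comp_red γ hcb
  exact Nat.card_addSubgroup_comap_eq_of_comp_eq _ (AddEquiv.shear φ₁ φ₂ φ₃) _
    (AddMonoidHom.prodMap_comp_shear _ _ _ h₁ h₂ h₃) hY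

theorem card_addSubgroup_comap_reduction_eq (hba : b ≤ a) (hcb : c ≤ b)
    {Y : AddSubgroup (V p)} {α β γ : ZMod p} {K₁ K₂ K₃ : AddSubgroup (ZMod p)} {n₁ n₂ n₃ : ℕ}
    (hY : Y.comap (shearV α β γ : V p →+ V p) = coord p K₁ K₂ K₃)
    (e₁ : K₁.comap (red p a : ZMod (p ^ a) →+ ZMod p) ≃+ ZMod (p ^ n₁))
    (e₂ : K₂.comap (red p b : ZMod (p ^ b) →+ ZMod p) ≃+ ZMod (p ^ n₂))
    (e₃ : K₃.comap (red p c : ZMod (p ^ c) →+ ZMod p) ≃+ ZMod (p ^ n₃)) :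
    Nat.card (AddSubgroup (Y.comap (reduction p a b c))) = f p n₁ n₂ n₃ :=
  (card_addSubgroup_comap_reduction_eq_of_comap_shearV hba hcb α β γ hY).trans
    (card_addSubgroup_comap_reduction_prod e₁ e₂ e₃)

theorem card_comap_reduction_bot :
    Nat.card (AddSubgroup ((⊥ : AddSubgroup (V p)).comap (reduction p a b c))) =
      f p (a - 1) (b - 1) (c - 1) := by
  rw [show (⊥ : AddSubgroup (V p)) = coord p ⊥ ⊥ ⊥ by rw [coord, bot_prod_bot, bot_prod_bot]]
  exact card_addSubgroup_comap_reduction_prod (comapRedBotEquiv a) (comapRedBotEquiv b)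
    (comapRedBotEquiv c)

theorem card_comap_reduction_top :
    Nat.card (AddSubgroup ((⊤ : AddSubgroup (V p)).comap (reduction p a b c))) = f p a b c := by
  rw [show (⊤ : AddSubgroup (V p)) = coord p ⊤ ⊤ ⊤ by rw [coord, top_prod_top, top_prod_top]]
  exact card_addSubgroup_comap_reduction_prod (comapRedTopEquiv a) (comapRedTopEquiv b)
    (comapRedTopEquiv c)

theorem sum_sq_card_comap_reduction_line (hba : b ≤ a) (hcb : c ≤ b) :
    ∑ t, (Nat.card (AddSubgroup ((line t).comap (reduction p a b c))) : ℤ) ^ 2 =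
      p ^ 2 * f p a (b - 1) (c - 1) ^ 2 + p * f p (a - 1) b (c - 1) ^ 2
        + f p (a - 1) (b - 1) c ^ 2 := by
  have h₁ (β γ : ZMod p) : Nat.card (AddSubgroup ((line (.inl (β, γ))).comap
      (reduction p a b c))) = f p a (b - 1) (c - 1) :=
    card_addSubgroup_comap_reduction_eq hba hcb (comap_shearV_line₁ β γ) (comapRedTopEquiv a)
      (comapRedBotEquiv b) (comapRedBotEquiv c)
  have h₂ (γ : ZMod p) : Nat.card (AddSubgroup ((line (.inr (.inl γ))).comap
      (reduction p a b c))) = f p (a - 1) b (c - 1) :=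
    card_addSubgroup_comap_reduction_eq hba hcb (comap_shearV_line₂ γ) (comapRedBotEquiv a)
      (comapRedTopEquiv b) (comapRedBotEquiv c)
  have h₃ : Nat.card (AddSubgroup ((line (p := p) (.inr (.inr ()))).comap
      (reduction p a b c))) = f p (a - 1) (b - 1) c :=
    card_addSubgroup_comap_reduction_eq hba hcb comap_shearV_line₃ (comapRedBotEquiv a)
      (comapRedBotEquiv b) (comapRedTopEquiv c)
  simp only [Fintype.sum_sum_type, Fintype.sum_prod_type, Fintype.sum_unique, h₁, h₂, h₃]
  simp
  ring

theorem sum_sq_card_comap_reduction_plane (hba : b ≤ a) (hcb : c ≤ b) :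
    ∑ t, (Nat.card (AddSubgroup ((plane t).comap (reduction p a b c))) : ℤ) ^ 2 =
      p ^ 2 * f p a b (c - 1) ^ 2 + p * f p a (b - 1) c ^ 2 + f p (a - 1) b c ^ 2 := by
  have h₁ (α β : ZMod p) : Nat.card (AddSubgroup ((plane (.inl (α, β))).comap
      (reduction p a b c))) = f p a b (c - 1) :=
    card_addSubgroup_comap_reduction_eq hba hcb (comap_shearV_plane₁₂ α β) (comapRedTopEquiv a)
      (comapRedTopEquiv b) (comapRedBotEquiv c)
  have h₂ (α : ZMod p) : Nat.card (AddSubgroup ((plane (.inr (.inl α))).comap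
      (reduction p a b c))) = f p a (b - 1) c :=
    card_addSubgroup_comap_reduction_eq hba hcb (comap_shearV_plane₁₃ α) (comapRedTopEquiv a)
      (comapRedBotEquiv b) (comapRedTopEquiv c)
  have h₃ : Nat.card (AddSubgroup ((plane (p := p) (.inr (.inr ()))).comap
      (reduction p a b c))) = f p (a - 1) b c :=
    card_addSubgroup_comap_reduction_eq hba hcb comap_shearV_plane₂₃ (comapRedBotEquiv a)
      (comapRedTopEquiv b) (comapRedTopEquiv c)
  simp only [Fintype.sum_sum_type, Fintype.sum_prod_type, Fintype.sum_unique, h₁, h₂, h₃]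
  simp
  ring

end RankThree

open RankThree in
theorem F2_rank_three (p l1 l2 l3 : ℕ) (hp : p.Prime)
    (h12 : l2 ≤ l1) (h23 : l3 ≤ l2) (h3 : 1 ≤ l3) :
    (F2 (ZMod (p ^ l1) × ZMod (p ^ l2) × ZMod (p ^ l3)) : ℤ) =
      -(p : ℤ) ^ 3 * (f p (l1 - 1) (l2 - 1) (l3 - 1) : ℤ) ^ 2
      + (p : ℤ) * ((f p (l1 - 1) (l2 - 1) l3 : ℤ) ^ 2
          + (p : ℤ) * (f p (l1 - 1) l2 (l3 - 1) : ℤ) ^ 2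
          + (p : ℤ) ^ 2 * (f p l1 (l2 - 1) (l3 - 1) : ℤ) ^ 2)
      - ((f p (l1 - 1) l2 l3 : ℤ) ^ 2
          + (p : ℤ) * (f p l1 (l2 - 1) l3 : ℤ) ^ 2
          + (p : ℤ) ^ 2 * (f p l1 l2 (l3 - 1) : ℤ) ^ 2)
      + (f p l1 l2 l3 : ℤ) ^ 2 := by
  have := Fact.mk hp
  have : NeZero l1 := ⟨by omega⟩
  have : NeZero l2 := ⟨by omega⟩
  have : NeZero l3 := ⟨by omega⟩
  have := Fintype.ofFinite (AddSubgroup (V p))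
  rw [F2_eq_sum_moebius (reduction p l1 l2 l3) (map_reduction_eq_top_iff h12 (h23.trans h12))
      (moebiusRankThree p) (sum_moebiusRankThree nsmul_prime_eq_zero card_V),
    sum_eq_of_card_eq_cube card_V, sum_ite_card_eq_prime, sum_ite_card_eq_sq,
    moebiusRankThree_bot, moebiusRankThree_top card_V, card_comap_reduction_bot,
    card_comap_reduction_top]
  have hline (t : CellIndex p) : moebiusRankThree p (line t) = p :=
    moebiusRankThree_of_card_eq_prime (card_line t)
  have hplane (t : CellIndex p) : moebiusRankThree p (plane t) = -1 :=
    moebiusRankThree_of_card_eq_sq (card_plane t)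
  simp only [hline, hplane, ← Finset.mul_sum, sum_sq_card_comap_reduction_line h12 h23,
    sum_sq_card_comap_reduction_plane h12 h23]
  ring
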